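/- arXiv:2501.14236 — 9 statements merged into one kernel-verified Lean document; each statement's English description precedes it below -/
import Mathlib

section
/- For every λ ∈ (1, q/(q−1)) the identity (H_q(λ)/(1−λ))·(p − (q(p−1)/(q−1))·λ) − q·(p·λ^(q−1) − (p−1)·λ^q) = (p−q)·H_q(λ)·(λ/((q−1)(λ−1)) + λ^q/H_q(λ)) holds. Consequently, for every s₁ ∈ (0,1), setting s₂′ = H_q(ω_p(s₁)), one has F(s₂′) = (p−q)·A(s₂′). -/
noncomputable section

open Real Set

/-- `H r z = r·z^(r-1) - (r-1)·z^r`. -/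
def H (r z : ℝ) : ℝ := r * z ^ (r - 1) - (r - 1) * z ^ r

/-- `ω` is the inverse of `H r`, mapping `(0,1]` into `[1, r/(r-1))`,
    so that `H r (ω s) = s` for `s ∈ (0,1]`. -/
def IsOmega (r : ℝ) (ω : ℝ → ℝ) : Prop :=
  ∀ s ∈ Set.Ioc (0 : ℝ) 1, ω s ∈ Set.Ico (1 : ℝ) (r / (r - 1)) ∧ H r (ω s) = s

/-- `τ(s₁,s₂,t) = ((p-q)/p)·(t^p - s₁)/(t^(p-q) - s₁/s₂)`. -/
def tau (p q s₁ s₂ t : ℝ) : ℝ :=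
  ((p - q) / p) * ((t ^ p - s₁) / (t ^ (p - q) - s₁ / s₂))

/-- `F(τ)` from the paper, where `ω` plays the role of `ω_q`. -/
def Ffun (p q : ℝ) (ω : ℝ → ℝ) (τ : ℝ) : ℝ :=
  (τ / (1 - ω τ)) * (p - (q * (p - 1) / (q - 1)) * ω τ)
    - q * (p * ω τ ^ (q - 1) - (p - 1) * ω τ ^ q)

/-- `A(s)` from the paper, where `ω` plays the role of `ω_q`. -/
def Afun (q : ℝ) (ω : ℝ → ℝ) (s : ℝ) : ℝ :=
  s * (ω s / ((q - 1) * (ω s - 1)) + ω s ^ q / s)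

lemma H_one {q : ℝ} : H q 1 = 1 := by
  simp [H]

lemma H_lt_one {q z : ℝ} (hq : 1 < q) (hz : 1 < z) : H q z < 1 := by
  have hz0 : (0:ℝ) < z := lt_trans one_pos hz
  have hs : (-1:ℝ) ≤ 1/z - 1 := by
    have : (0:ℝ) < 1/z := by positivity
    linarith
  have hs' : 1/z - 1 ≠ 0 := by
    have : 1/z < 1 := by rw [div_lt_one hz0]; exact hz
    linarith
  have hb := one_add_mul_self_lt_rpow_one_add hs hs' hq
  have h1 : (1 + (1/z - 1)) = 1/z := by ring
  rw [h1] at hb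
  have hzq : (0:ℝ) < z ^ q := Real.rpow_pos_of_pos hz0 q
  have hzq1 : (0:ℝ) < z ^ (q-1) := Real.rpow_pos_of_pos hz0 _
  have hinv : (1/z) ^ q = (z ^ q)⁻¹ := by
    rw [one_div, ← Real.inv_rpow (le_of_lt hz0)]
  rw [hinv] at hb
  have hmul : (1 + q * (1/z - 1)) * z ^ q < 1 := by
    have := mul_lt_mul_of_pos_right hb hzq
    rwa [inv_mul_cancel₀ (ne_of_gt hzq)] at this
  have hsplit : z ^ q = z ^ (q-1) * z := by
    rw [← Real.rpow_add_one (ne_of_gt hz0)]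
    ring_nf
  have : (1 + q * (1/z - 1)) * z ^ q = z ^ q - q * z ^ q + q * z ^ (q-1) := by
    rw [hsplit]; field_simp; ring
  rw [this] at hmul
  unfold H; linarith

lemma H_pos {q z : ℝ} (hq : 1 < q) (hz1 : 1 ≤ z) (hz2 : z < q/(q-1)) : 0 < H q z := by
  have hq1 : (0:ℝ) < q - 1 := by linarith
  have hz0 : (0:ℝ) < z := lt_of_lt_of_le one_pos hz1
  have hw : 0 < q - (q-1)*z := by
    have := (lt_div_iff₀ hq1).mp hz2
    nlinarith
  have hsplit : z ^ q = z ^ (q-1) * z := by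
    rw [← Real.rpow_add_one (ne_of_gt hz0)]; ring_nf
  have hzq1 : (0:ℝ) < z ^ (q-1) := Real.rpow_pos_of_pos hz0 _
  unfold H
  rw [hsplit]
  nlinarith

lemma key_identity (p q : ℝ) (hq : 1 < q) (l : ℝ)
    (hl : l ∈ Set.Ioo (1 : ℝ) (q / (q - 1))) :
    (H q l / (1 - l)) * (p - (q * (p - 1) / (q - 1)) * l)
        - q * (p * l ^ (q - 1) - (p - 1) * l ^ q)
      = (p - q) * H q l * (l / ((q - 1) * (l - 1)) + l ^ q / H q l) := by
  obtain ⟨hl1, hl2⟩ := hl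
  have hq1 : (0:ℝ) < q - 1 := by linarith
  have hl0 : (0:ℝ) < l := lt_trans one_pos hl1
  have hsplit : l ^ q = l ^ (q-1) * l := by
    rw [← Real.rpow_add_one (ne_of_gt hl0)]; ring_nf
  have hX : (0:ℝ) < l ^ (q-1) := Real.rpow_pos_of_pos hl0 _
  have hw : 0 < q - (q-1)*l := by
    have := (lt_div_iff₀ hq1).mp hl2
    nlinarith
  have hHpos : 0 < H q l := H_pos hq (le_of_lt hl1) hl2
  have hHne : q * l ^ (q-1) - (q-1) * (l ^ (q-1) * l) ≠ 0 := by
    rw [← hsplit]; exact ne_of_gt hHpos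
  have h1l : 1 - l ≠ 0 := by linarith
  have hl1' : l - 1 ≠ 0 := by linarith
  unfold H
  rw [hsplit]
  field_simp
  ring

/-- the identity of Lemma 2.2 and its consequence
`F(s₂') = (p-q)·A(s₂')` for `s₂' = H_q(ω_p(s₁))`. -/
theorem stmt_2 (p q : ℝ) (hq : 1 < q) (hqp : q < p)
    (ωp ωq : ℝ → ℝ) (hωp : IsOmega p ωp) (hωq : IsOmega q ωq) :
    (∀ l ∈ Set.Ioo (1 : ℝ) (q / (q - 1)),
        (H q l / (1 - l)) * (p - (q * (p - 1) / (q - 1)) * l)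
            - q * (p * l ^ (q - 1) - (p - 1) * l ^ q)
          = (p - q) * H q l * (l / ((q - 1) * (l - 1)) + l ^ q / H q l)) ∧
    (∀ s₁ ∈ Set.Ioo (0 : ℝ) 1,
        Ffun p q ωq (H q (ωp s₁)) = (p - q) * Afun q ωq (H q (ωp s₁))) := by
  have hq1 : (0:ℝ) < q - 1 := by linarith
  have hp1 : (0:ℝ) < p - 1 := by linarith
  have hp : 1 < p := lt_trans hq hqp
  constructor
  · exact fun l hl => key_identity p q hq l hl
  · intro s₁ hs₁
    obtain ⟨hz, hHp⟩ := hωp s₁ ⟨hs₁.1, le_of_lt hs₁.2⟩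
    set z := ωp s₁ with hzdef
    have hz1 : 1 < z := by
      rcases lt_or_eq_of_le hz.1 with h | h
      · exact h
      · exfalso
        rw [← h] at hHp
        rw [H_one] at hHp
        exact absurd hHp.symm (ne_of_lt hs₁.2)
    -- z < p/(p-1) < q/(q-1)
    have hzq : z < q / (q-1) := by
      refine lt_of_lt_of_le hz.2 ?_
      rw [div_le_div_iff₀ hp1 hq1]
      nlinarith
    set τ := H q z with hτdef
    have hτ0 : 0 < τ := H_pos hq (le_of_lt hz1) hzq
    have hτ1 : τ < 1 := H_lt_one hq hz1
    obtain ⟨hl, hHq⟩ := hωq τ ⟨hτ0, le_of_lt hτ1⟩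
    set l := ωq τ with hldef
    have hl1 : 1 < l := by
      rcases lt_or_eq_of_le hl.1 with h | h
      · exact h
      · exfalso
        rw [← h] at hHq
        rw [H_one] at hHq
        exact absurd hHq.symm (ne_of_lt hτ1)
    have hkey := key_identity p q hq l ⟨hl1, hl.2⟩
    rw [hHq] at hkey
    have hτne : τ ≠ 0 := ne_of_gt hτ0
    simp only [Ffun, Afun, ← hldef]
    calc (τ / (1 - l)) * (p - q * (p - 1) / (q - 1) * l)
          - q * (p * l ^ (q - 1) - (p - 1) * l ^ q)
        = (p - q) * τ * (l / ((q - 1) * (l - 1)) + l ^ q / τ) := hkey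
      _ = (p - q) * (τ * (l / ((q - 1) * (l - 1)) + l ^ q / τ)) := by ring
end
end

section
/- The function A₁(γ) = H_q(γ)·γ/((q−1)(γ−1)) + γ^q is strictly decreasing on the interval (1, q/(q−1)). -/
/-! Adding `γ^q` to `H_q(γ)·γ / ((q-1)(γ-1))` cancels everything but `γ^q / ((q-1)(γ-1))`, and
`(γ^q / (γ-1))' = γ^(q-1) ((q-1)γ - q) / (γ-1)^2` is negative exactly for `γ < q/(q-1)`. -/

noncomputable section

open Real Set

theorem H_mul_div_add_rpow_eq {q x : ℝ} (hq : q ≠ 1) (hx0 : 0 < x) (hx1 : x ≠ 1) :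
    H q x * x / ((q - 1) * (x - 1)) + x ^ q = x ^ q / (x - 1) / (q - 1) := by
  have hxq : x ^ (q - 1) * x = x ^ q := by
    rw [rpow_sub_one hx0.ne', div_mul_cancel₀ _ hx0.ne']
  have hq' : q - 1 ≠ 0 := sub_ne_zero.mpr hq
  have hx1' : x - 1 ≠ 0 := sub_ne_zero.mpr hx1
  rw [H]
  field_simp
  linear_combination q * hxq

theorem hasDerivAt_rpow_div_sub_one {q x : ℝ} (hx0 : 0 < x) (hx1 : x ≠ 1) :
    HasDerivAt (fun x => x ^ q / (x - 1)) (x ^ (q - 1) * ((q - 1) * x - q) / (x - 1) ^ 2) x := by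
  have hd := (hasDerivAt_rpow_const (p := q) (Or.inl hx0.ne')).div
    ((hasDerivAt_id x).sub_const 1) (sub_ne_zero.mpr hx1)
  refine hd.congr_deriv ?_
  simp only [id]
  rw [rpow_sub_one hx0.ne']
  field_simp
  ring

theorem strictAntiOn_rpow_div_sub_one {q : ℝ} (hq : 1 < q) :
    StrictAntiOn (fun x => x ^ q / (x - 1)) (Ioc 1 (q / (q - 1))) := by
  have hq1 : 0 < q - 1 := sub_pos.mpr hq
  apply strictAntiOn_of_deriv_neg (convex_Ioc _ _)
  · refine ContinuousOn.div (continuousOn_id.rpow_const fun x _ => Or.inr (by linarith))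
      (continuousOn_id.sub continuousOn_const) fun x hx => ?_
    exact sub_ne_zero.mpr (ne_of_gt hx.1)
  · rw [interior_Ioc]
    rintro x ⟨hx1, hxq⟩
    rw [(hasDerivAt_rpow_div_sub_one (q := q) (by linarith) hx1.ne').deriv]
    have hlt : (q - 1) * x < q := by rwa [lt_div_iff₀' hq1] at hxq
    have hpow : 0 < x ^ (q - 1) := rpow_pos_of_pos (by linarith) _
    exact div_neg_of_neg_of_pos (mul_neg_of_pos_of_neg hpow (by linarith))
      (pow_pos (sub_pos.mpr hx1) 2)

theorem stmt_4_general (q : ℝ) (hq : 1 < q) :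
    StrictAntiOn (fun γ : ℝ => H q γ * γ / ((q - 1) * (γ - 1)) + γ ^ q)
      (Set.Ioo (1 : ℝ) (q / (q - 1))) := by
  have hdecr : StrictAntiOn (fun x => x ^ q / (x - 1) / (q - 1)) (Ioo 1 (q / (q - 1))) :=
    fun a ha b hb hab => div_lt_div_of_pos_right
      (strictAntiOn_rpow_div_sub_one hq (Ioo_subset_Ioc_self ha) (Ioo_subset_Ioc_self hb) hab)
      (sub_pos.mpr hq)
  refine hdecr.congr fun x hx => ?_
  exact (H_mul_div_add_rpow_eq hq.ne' (by linarith [hx.1]) (ne_of_gt hx.1)).symm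

/-- `A₁(γ) = H_q(γ)·γ/((q−1)(γ−1)) + γ^q` is strictly decreasing
on `(1, q/(q−1))`. -/
theorem stmt_4 (p q : ℝ) (hq : 1 < q) (hqp : q < p) :
    StrictAntiOn (fun γ : ℝ => H q γ * γ / ((q - 1) * (γ - 1)) + γ ^ q)
      (Set.Ioo (1 : ℝ) (q / (q - 1))) :=
  stmt_4_general q hq
end
end

section
/- The function F₁(γ) = (H_q(γ)/(1−γ))·(p − (q(p−1)/(q−1))·γ) − q·(p·γ^(q−1) − (p−1)·γ^q) is strictly decreasing on the interval (1, q/(q−1)). -/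
noncomputable section

open Real Set

/-- `F₁(γ)` is strictly decreasing on `(1, q/(q−1))`. -/
theorem stmt_6 (p q : ℝ) (hq : 1 < q) (hqp : q < p) :
    StrictAntiOn
      (fun γ : ℝ => (H q γ / (1 - γ)) * (p - (q * (p - 1) / (q - 1)) * γ)
        - q * (p * γ ^ (q - 1) - (p - 1) * γ ^ q))
      (Set.Ioo (1 : ℝ) (q / (q - 1))) := by
  have hq1 : (0:ℝ) < q - 1 := by linarith
  set g : ℝ → ℝ := fun x => x ^ q / (1 - x) with hgdef
  -- Key identity
  have key : ∀ x ∈ Set.Ioo (1:ℝ) (q / (q - 1)),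
      (H q x / (1 - x)) * (p - (q * (p - 1) / (q - 1)) * x)
        - q * (p * x ^ (q - 1) - (p - 1) * x ^ q)
      = ((q - p) / (q - 1)) * g x := by
    intro x hx
    have hx1 : (1:ℝ) < x := hx.1
    have hx0 : (0:ℝ) < x := by linarith
    have hxq : x ^ q = x ^ (q - 1) * x := by
      nth_rewrite 1 [show q = (q-1)+1 by ring]; rw [Real.rpow_add hx0, Real.rpow_one]
    have h1 : (1:ℝ) - x ≠ 0 := by linarith
    simp only [H, hgdef, hxq]
    field_simp
    ring
  -- g is strictly monotone on the interval
  have hmono : StrictMonoOn g (Set.Ioo (1:ℝ) (q / (q - 1))) := by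
    apply strictMonoOn_of_deriv_pos (convex_Ioo _ _)
    · apply ContinuousOn.div
      · intro x hx
        exact (Real.continuousAt_rpow_const x q (Or.inl (by linarith [hx.1]))).continuousWithinAt
      · fun_prop
      · intro x hx; have := hx.1; intro h; linarith [hx.1]
    · intro x hx
      rw [interior_Ioo] at hx
      have hx1 : (1:ℝ) < x := hx.1
      have hx0 : (0:ℝ) < x := by linarith
      have h1 : (1:ℝ) - x ≠ 0 := by linarith
      have hd : HasDerivAt g ((q * x ^ (q-1) * (1 - x) - x ^ q * (-1)) / (1 - x)^2) x := by
        exact ((Real.hasDerivAt_rpow_const (Or.inl (ne_of_gt hx0))).div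
          ((hasDerivAt_id x).const_sub 1) h1)
      rw [hd.deriv]
      have hxq : x ^ q = x ^ (q - 1) * x := by
        nth_rewrite 1 [show q = (q-1)+1 by ring]; rw [Real.rpow_add hx0, Real.rpow_one]
      have hnum : q * x ^ (q-1) * (1 - x) - x ^ q * (-1)
          = x ^ (q - 1) * (q - (q - 1) * x) := by rw [hxq]; ring
      rw [hnum]
      apply div_pos
      · apply mul_pos (Real.rpow_pos_of_pos hx0 _)
        have : x < q / (q - 1) := hx.2
        have : x * (q - 1) < q := by
          rw [lt_div_iff₀ hq1] at this; linarith
        linarith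
      · positivity
  intro a ha b hb hab
  simp only
  rw [key a ha, key b hb]
  have hK : (q - p) / (q - 1) < 0 := div_neg_of_neg_of_pos (by linarith) hq1
  exact mul_lt_mul_of_neg_left (hmono ha hb hab) hK
end
end

section
/- For all real s₁, s₂ with 0 < s₁^(q−1) ≤ s₂^(p−1) < 1 and every u ∈ [1, p/(p−1)): p·(s₁/s₂)·u^q − q·u^p − (p−q)·s₁ < 0. -/
noncomputable section

open Real Set

/-!
Since `s₁ < 1` and `(q - 1)/(p - 1) < q/p`, the constraint `s₁^(q-1) ≤ s₂^(p-1)` gives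
`s₂ ≥ s₁^((q-1)/(p-1)) > s₁^(q/p)`, that is `s₁/s₂ < s₁^(1 - q/p)`. Weighted AM–GM with weights
`q/p` and `1 - q/p` bounds `p·s₁^(1 - q/p)·u^q` by `q·u^p + (p - q)·s₁`.
-/

theorem sub_one_div_sub_one_lt_div {a b : ℝ} (hb : 1 < b) (hab : a < b) :
    (a - 1) / (b - 1) < a / b := by
  rw [div_lt_div_iff₀ (by linarith) (by linarith)]
  linarith

theorem Real.div_lt_rpow_one_sub_of_rpow_lt {s t a : ℝ} (hs : 0 < s) (ht : 0 < t)
    (h : s ^ a < t) : s / t < s ^ (1 - a) := by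
  rw [div_lt_iff₀ ht]
  calc s = s ^ (1 - a) * s ^ a := by rw [← Real.rpow_add hs, sub_add_cancel, Real.rpow_one]
    _ < s ^ (1 - a) * t := by gcongr

theorem Real.mul_rpow_mul_rpow_le_add {p q u s : ℝ} (hq : 0 ≤ q) (hqp : q ≤ p)
    (hu : 0 ≤ u) (hs : 0 ≤ s) :
    p * (u ^ q * s ^ (1 - q / p)) ≤ q * u ^ p + (p - q) * s := by
  rcases hqp.eq_or_lt with rfl | hqp
  · rcases hq.eq_or_lt with rfl | hq
    · simp
    · simp [hq.ne']
  have hp : 0 < p := hq.trans_lt hqp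
  have amgm := Real.geom_mean_le_arith_mean2_weighted (div_nonneg hq hp.le)
    (sub_nonneg.2 ((div_le_one hp).2 hqp.le)) (Real.rpow_nonneg hu p) hs (add_sub_cancel _ _)
  rw [← Real.rpow_mul hu, mul_div_cancel₀ _ hp.ne'] at amgm
  calc p * (u ^ q * s ^ (1 - q / p))
      ≤ p * (q / p * u ^ p + (1 - q / p) * s) := by gcongr
    _ = q * u ^ p + (p - q) * s := by field_simp

theorem Real.rpow_div_lt_of_rpow_sub_one_le {p q s₁ s₂ : ℝ} (hq : 1 < q) (hqp : q < p)
    (hs₁ : 0 < s₁) (hs₂ : 0 < s₂) (h : s₁ ^ (q - 1) ≤ s₂ ^ (p - 1)) (h' : s₂ ^ (p - 1) < 1) :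
    s₁ ^ (q / p) < s₂ := by
  have hs₁_lt_one : s₁ < 1 :=
    (Real.rpow_lt_one_iff' hs₁.le (by linarith)).1 (h.trans_lt h')
  have hs₂_ge : s₁ ^ ((q - 1) / (p - 1)) ≤ s₂ := by
    rw [div_eq_mul_inv, Real.rpow_mul hs₁.le,
      Real.rpow_inv_le_iff_of_pos (by positivity) hs₂.le (by linarith)]
    exact h
  exact (Real.rpow_lt_rpow_of_exponent_gt hs₁ hs₁_lt_one
    (sub_one_div_sub_one_lt_div (by linarith) hqp)).trans_le hs₂_ge

theorem stmt_7_general (p q : ℝ) (hq : 1 < q) (hqp : q < p)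
    (s₁ s₂ : ℝ) (hs₁ : 0 < s₁) (hs₂ : 0 < s₂)
    (h2 : s₁ ^ (q - 1) ≤ s₂ ^ (p - 1))
    (h3 : s₂ ^ (p - 1) < 1) :
    ∀ u ∈ Set.Ico (1 : ℝ) (p / (p - 1)),
      p * (s₁ / s₂) * u ^ q - q * u ^ p - (p - q) * s₁ < 0 := by
  rintro u ⟨hu, -⟩
  have hp : 0 < p := by linarith
  have hratio : s₁ / s₂ < s₁ ^ (1 - q / p) :=
    Real.div_lt_rpow_one_sub_of_rpow_lt hs₁ hs₂
      (Real.rpow_div_lt_of_rpow_sub_one_le hq hqp hs₁ hs₂ h2 h3)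
  have hamgm := Real.mul_rpow_mul_rpow_le_add (p := p) (by linarith) hqp.le
    (zero_le_one.trans hu) hs₁.le
  have huq : 0 < u ^ q := Real.rpow_pos_of_pos (zero_lt_one.trans_le hu) q
  calc p * (s₁ / s₂) * u ^ q - q * u ^ p - (p - q) * s₁
      < p * (u ^ q * s₁ ^ (1 - q / p)) - q * u ^ p - (p - q) * s₁ := by
        rw [mul_comm (u ^ q), ← mul_assoc]; gcongr
    _ ≤ 0 := by linarith

/-- for `(s₁,s₂)` in the domain `0 < s₁^(q−1) ≤ s₂^(p−1) < 1`
(`s₁, s₂ > 0`) and every `u ∈ [1, p/(p−1))`: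
`p·(s₁/s₂)·u^q − q·u^p − (p−q)·s₁ < 0`. -/
theorem stmt_7 (p q : ℝ) (hq : 1 < q) (hqp : q < p)
    (s₁ s₂ : ℝ) (hs₁ : 0 < s₁) (hs₂ : 0 < s₂)
    (h1 : 0 < s₁ ^ (q - 1)) (h2 : s₁ ^ (q - 1) ≤ s₂ ^ (p - 1))
    (h3 : s₂ ^ (p - 1) < 1) :
    ∀ u ∈ Set.Ico (1 : ℝ) (p / (p - 1)),
      p * (s₁ / s₂) * u ^ q - q * u ^ p - (p - q) * s₁ < 0 :=
  stmt_7_general p q hq hqp s₁ s₂ hs₁ hs₂ h2 h3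
end
end

section
/- For all real s₁, s₂ with 0 < s₁^(q−1) ≤ s₂^(p−1) < 1, the map t ↦ τ(s₁,s₂,t) = ((p−q)/p)·(t^p − s₁)/(t^(p−q) − s₁/s₂) is strictly increasing on the interval [1, p/(p−1)). -/
noncomputable section

open Real Set

set_option maxHeartbeats 1000000 in
/-- for `(s₁,s₂)` in the domain `0 < s₁^(q−1) ≤ s₂^(p−1) < 1`
(`s₁, s₂ > 0`), the map `t ↦ τ(s₁,s₂,t)` is strictly increasing
on `[1, p/(p−1))`. -/
theorem stmt_11 (p q : ℝ) (hq : 1 < q) (hqp : q < p)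
    (s₁ s₂ : ℝ) (hs₁ : 0 < s₁) (hs₂ : 0 < s₂)
    (h1 : 0 < s₁ ^ (q - 1)) (h2 : s₁ ^ (q - 1) ≤ s₂ ^ (p - 1))
    (h3 : s₂ ^ (p - 1) < 1) :
    StrictMonoOn (fun t => tau p q s₁ s₂ t)
      (Set.Ico (1 : ℝ) (p / (p - 1))) := by
  have hp1 : 1 < p := hq.trans hqp
  have hpq : 0 < p - q := by linarith
  have hq1 : 0 < q - 1 := by linarith
  have hs₂1 : s₂ < 1 := by
    by_contra h
    push_neg at h
    exact absurd (Real.one_le_rpow h (by linarith : (0:ℝ) ≤ p - 1)) (by linarith)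
  have hss : s₁ < s₂ := by
    by_contra h
    push_neg at h
    have h4 : s₂ ^ (p - 1) < s₂ ^ (q - 1) :=
      Real.rpow_lt_rpow_of_exponent_gt hs₂ hs₂1 (by linarith)
    have h5 : s₂ ^ (q - 1) ≤ s₁ ^ (q - 1) :=
      Real.rpow_le_rpow hs₂.le h (by linarith)
    linarith
  have ha0 : 0 < s₁ / s₂ := div_pos hs₁ hs₂
  have ha1 : s₁ / s₂ < 1 := (div_lt_one hs₂).2 hss
  -- auxiliary variable u = s₂^(1/(q-1))
  obtain ⟨u, hu_def⟩ : ∃ u : ℝ, u = s₂ ^ (q - 1)⁻¹ := ⟨_, rfl⟩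
  have hu0 : 0 < u := hu_def ▸ Real.rpow_pos_of_pos hs₂ _
  have hu1 : u < 1 := hu_def ▸ Real.rpow_lt_one hs₂.le hs₂1 (by positivity)
  have hs1u : s₁ ≤ u ^ (p - 1) := by
    have h5 : (s₁ ^ (q - 1)) ^ (q - 1)⁻¹ ≤ (s₂ ^ (p - 1)) ^ (q - 1)⁻¹ :=
      Real.rpow_le_rpow h1.le h2 (by positivity)
    rw [← Real.rpow_mul hs₁.le, ← Real.rpow_mul hs₂.le, mul_inv_cancel₀ hq1.ne',
      Real.rpow_one, mul_comm, Real.rpow_mul hs₂.le] at h5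
    rw [hu_def]
    exact h5
  have hs2u : u ^ (q - 1) = s₂ := by
    rw [hu_def, ← Real.rpow_mul hs₂.le, inv_mul_cancel₀ hq1.ne', Real.rpow_one]
  have hUw : u ^ (p - 1) = u ^ (p - q) * s₂ := by
    rw [← hs2u, ← Real.rpow_add hu0]; congr 1; ring
  have hw1 : u ^ (p - q) < 1 := Real.rpow_lt_one hu0.le hu1 hpq
  -- Bernoulli: φ(u) > 0
  have hr1 : 1 ≤ (p - 1) / (p - q) := (one_le_div hpq).2 (by linarith)
  have hB := one_add_mul_self_le_rpow_one_add
    (s := u ^ (p - q) - 1) (by nlinarith [Real.rpow_pos_of_pos hu0 (p - q)]) hr1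
  have e : (1:ℝ) + (u ^ (p - q) - 1) = u ^ (p - q) := by ring
  have e2 : (u ^ (p - q)) ^ ((p - 1) / (p - q)) = u ^ (p - 1) := by
    rw [← Real.rpow_mul hu0.le]; congr 1; field_simp
  rw [e, e2] at hB
  -- hB : 1 + (p-1)/(p-q) * (u^(p-q) - 1) ≤ u^(p-1)
  have h6 : (p - q) * (1 + (p - 1) / (p - q) * (u ^ (p - q) - 1)) ≤ (p - q) * u ^ (p - 1) :=
    mul_le_mul_of_nonneg_left hB hpq.le
  have hexp : (p - q) * (1 + (p - 1) / (p - q) * (u ^ (p - q) - 1))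
      = (p - q) + (p - 1) * (u ^ (p - q) - 1) := by
    field_simp
  rw [hexp] at h6
  have hkey1 : 0 < q - p * u ^ (p - q) + (p - q) * u ^ (p - 1) := by nlinarith [h6, hw1]
  -- key : g(1) > 0
  have hA : 0 ≤ (u ^ (p - 1) - s₁) * (p - (p - q) * s₂) :=
    mul_nonneg (by linarith) (by nlinarith [hpq, hs₂1])
  have hBp : 0 < s₂ * (q - p * u ^ (p - q) + (p - q) * u ^ (p - 1)) := mul_pos hs₂ hkey1
  have hUw' : p * u ^ (p - 1) = p * (u ^ (p - q) * s₂) := by rw [hUw]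
  have key2 : p * s₁ < q * s₂ + (p - q) * s₁ * s₂ := by nlinarith [hA, hBp, hUw']
  have key : p * (s₁ / s₂) < q + (p - q) * s₁ := by
    rw [mul_div_assoc', div_lt_iff₀ hs₂]
    linarith [key2]
  -- main monotonicity argument
  have hM1 : (1:ℝ) < p / (p - 1) := (one_lt_div (by linarith)).2 (by linarith)
  apply strictMonoOn_of_deriv_pos (convex_Ico _ _)
  · -- continuity
    simp only [tau]
    apply ContinuousOn.mul continuousOn_const
    apply ContinuousOn.div
    · exact ContinuousOn.sub
        (fun x _ => (Real.continuousAt_rpow_const x p (Or.inr (by linarith))).continuousWithinAt)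
        continuousOn_const
    · exact ContinuousOn.sub
        (fun x _ => (Real.continuousAt_rpow_const x (p - q) (Or.inr hpq.le)).continuousWithinAt)
        continuousOn_const
    · intro x hx
      have hxpq : (1:ℝ) ≤ x ^ (p - q) := Real.one_le_rpow hx.1 hpq.le
      have : 0 < x ^ (p - q) - s₁ / s₂ := by linarith
      exact this.ne'
  · intro x hx
    rw [interior_Ico] at hx
    have hx1 : 1 < x := hx.1
    have hx0 : 0 < x := by linarith
    have hxpq : (1:ℝ) ≤ x ^ (p - q) := Real.one_le_rpow hx1.le hpq.le
    have hden : 0 < x ^ (p - q) - s₁ / s₂ := by linarith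
    have hd1 : HasDerivAt (fun t : ℝ => t ^ p - s₁) (p * x ^ (p - 1)) x :=
      (Real.hasDerivAt_rpow_const (Or.inl hx0.ne')).sub_const s₁
    have hd2 : HasDerivAt (fun t : ℝ => t ^ (p - q) - s₁ / s₂) ((p - q) * x ^ (p - q - 1)) x :=
      (Real.hasDerivAt_rpow_const (Or.inl hx0.ne')).sub_const _
    have hdiv := hd1.div hd2 hden.ne'
    have htau : HasDerivAt (fun t => tau p q s₁ s₂ t)
        (((p - q) / p) * ((p * x ^ (p - 1) * (x ^ (p - q) - s₁ / s₂)
          - (x ^ p - s₁) * ((p - q) * x ^ (p - q - 1))) / (x ^ (p - q) - s₁ / s₂) ^ 2)) x := by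
      simpa [tau] using hdiv.const_mul ((p - q) / p)
    rw [htau.deriv]
    have e1 : x ^ (p - 1) = x ^ (p - q - 1) * x ^ q := by
      rw [← Real.rpow_add hx0]; congr 1; ring
    have e3 : x ^ (p - 1) * x ^ (p - q) = x ^ (p - q - 1) * x ^ p := by
      rw [← Real.rpow_add hx0, ← Real.rpow_add hx0]; congr 1; ring
    have hg : 0 < q * x ^ p - p * (s₁ / s₂) * x ^ q + (p - q) * s₁ := by
      have hxq : (1:ℝ) ≤ x ^ q := Real.one_le_rpow hx1.le (by linarith)
      have hr2 : 1 ≤ p / q := (one_le_div (by linarith)).2 hqp.le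
      have hB2 := one_add_mul_self_le_rpow_one_add (s := x ^ q - 1) (by linarith) hr2
      have e4 : (1:ℝ) + (x ^ q - 1) = x ^ q := by ring
      have e5 : (x ^ q) ^ (p / q) = x ^ p := by
        rw [← Real.rpow_mul hx0.le]; congr 1; field_simp
      rw [e4, e5] at hB2
      have hB2' : q * (1 + p / q * (x ^ q - 1)) ≤ q * x ^ p :=
        mul_le_mul_of_nonneg_left hB2 (by linarith)
      have e6 : q * (1 + p / q * (x ^ q - 1)) = q + p * (x ^ q - 1) := by
        field_simp
      rw [e6] at hB2'
      nlinarith [hB2', key, hxq, ha1,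
        mul_le_mul_of_nonneg_left hxq (mul_nonneg (by linarith : (0:ℝ) ≤ p)
          (by linarith : (0:ℝ) ≤ 1 - s₁ / s₂))]
    have hnum : 0 < p * x ^ (p - 1) * (x ^ (p - q) - s₁ / s₂)
        - (x ^ p - s₁) * ((p - q) * x ^ (p - q - 1)) := by
      have hx3 : 0 < x ^ (p - q - 1) := Real.rpow_pos_of_pos hx0 _
      have hfact : p * x ^ (p - 1) * (x ^ (p - q) - s₁ / s₂)
          - (x ^ p - s₁) * ((p - q) * x ^ (p - q - 1))
          = x ^ (p - q - 1) * (q * x ^ p - p * (s₁ / s₂) * x ^ q + (p - q) * s₁) := by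
        linear_combination p * e3 - p * (s₁ / s₂) * e1
      rw [hfact]
      exact mul_pos hx3 hg
    exact mul_pos (div_pos hpq (by linarith)) (div_pos hnum (pow_pos hden 2))
end
end

section
/- Let s₁, s₂ satisfy 0 < s₁^(q−1) ≤ s₂^(p−1) < 1, let t satisfy 1 ≤ t ≤ ω_p(s₁), suppose τ := τ(s₁,s₂,t) ∈ (0,1), and suppose (s₁,s₂,t) satisfies the defining equation. Then Δ₁ := q·(p − (p−1)·ω_q(τ))·ω_q(τ)^(q−1) + (p − (q(p−1)/(q−1))·ω_q(τ))·(τ − t^q)/(ω_q(τ) − 1) > 0. -/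
noncomputable section

open Real Set

/-- positivity of `Δ₁`. -/
theorem stmt_12 (p q : ℝ) (hq : 1 < q) (hqp : q < p)
    (ωp ωq : ℝ → ℝ) (hωp : IsOmega p ωp) (hωq : IsOmega q ωq)
    (s₁ s₂ t : ℝ) (hs₁ : 0 < s₁) (hs₂ : 0 < s₂)
    (h1 : 0 < s₁ ^ (q - 1)) (h2 : s₁ ^ (q - 1) ≤ s₂ ^ (p - 1))
    (h3 : s₂ ^ (p - 1) < 1)
    (ht1 : 1 ≤ t) (ht2 : t ≤ ωp s₁)
    (hτ : tau p q s₁ s₂ t ∈ Set.Ioo (0 : ℝ) 1)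
    (heq : q * (p * ωq (tau p q s₁ s₂ t) ^ (q - 1)
          - (p - 1) * ωq (tau p q s₁ s₂ t) ^ q) * (t ^ (p - q) - s₁ / s₂)
        = (p - q) * s₁ * (ωq s₂ ^ q / s₂ - 1)) :
    0 < q * (p - (p - 1) * ωq (tau p q s₁ s₂ t)) * ωq (tau p q s₁ s₂ t) ^ (q - 1)
        + (p - (q * (p - 1) / (q - 1)) * ωq (tau p q s₁ s₂ t))
          * (tau p q s₁ s₂ t - t ^ q) / (ωq (tau p q s₁ s₂ t) - 1) := by
  obtain ⟨hτ0, hτ1⟩ := hτ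
  set τ := tau p q s₁ s₂ t with hτdef
  have hq0 : (0 : ℝ) < q := by linarith
  have hp0 : (0 : ℝ) < p := by linarith
  -- s₂ < 1 and s₁ < 1
  have hs₂1 : s₂ < 1 := by
    by_contra h
    push_neg at h
    have : (1 : ℝ) ≤ s₂ ^ (p - 1) := by
      calc (1 : ℝ) = 1 ^ (p - 1) := (Real.one_rpow _).symm
        _ ≤ s₂ ^ (p - 1) := Real.rpow_le_rpow (by norm_num) h (by linarith)
    linarith
  have hs₁1 : s₁ < 1 := by
    by_contra h
    push_neg at h
    have : (1 : ℝ) ≤ s₁ ^ (q - 1) := by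
      calc (1 : ℝ) = 1 ^ (q - 1) := (Real.one_rpow _).symm
        _ ≤ s₁ ^ (q - 1) := Real.rpow_le_rpow (by norm_num) h (by linarith)
    linarith
  -- properties of w := ωq s₂
  obtain ⟨⟨hw1, hw2⟩, hwH⟩ := hωq s₂ ⟨hs₂, hs₂1.le⟩
  set w := ωq s₂ with hwdef
  have hw0 : (0 : ℝ) < w := by linarith
  have hwgt : 1 < w := by
    rcases lt_or_eq_of_le hw1 with h | h
    · exact h
    · exfalso
      rw [← h] at hwH
      simp [H, Real.one_rpow] at hwH
      linarith
  -- w^q > s₂, hence α(s₂) > 0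
  have hwsub : w ^ (q - 1) = w ^ q / w := by
    rw [Real.rpow_sub hw0, Real.rpow_one]
  have hwqpos : 0 < w ^ q := Real.rpow_pos_of_pos hw0 q
  have hkey : s₂ < w ^ q := by
    have hH : q * (w ^ q / w) - (q - 1) * w ^ q = s₂ := by
      rw [← hwsub]; simpa [H] using hwH
    have hs₂eq : s₂ = w ^ q * (q / w - (q - 1)) := by
      rw [← hH]; field_simp
    have hqw : q / w < q := div_lt_self hq0 hwgt
    nlinarith
  have hαpos : 0 < w ^ q / s₂ - 1 := by
    have : 1 < w ^ q / s₂ := (one_lt_div hs₂).mpr hkey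
    linarith
  -- t^p ≥ 1 and t^q ≥ 1
  have htp : (1 : ℝ) ≤ t ^ p := by
    calc (1 : ℝ) = 1 ^ p := (Real.one_rpow _).symm
      _ ≤ t ^ p := Real.rpow_le_rpow (by norm_num) ht1 hp0.le
  have htq : (1 : ℝ) ≤ t ^ q := by
    calc (1 : ℝ) = 1 ^ q := (Real.one_rpow _).symm
      _ ≤ t ^ q := Real.rpow_le_rpow (by norm_num) ht1 hq0.le
  have hN : 0 < t ^ p - s₁ := by linarith
  -- denominator positivity
  have hD : 0 < t ^ (p - q) - s₁ / s₂ := by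
    by_contra h
    push_neg at h
    have hdiv : (t ^ p - s₁) / (t ^ (p - q) - s₁ / s₂) ≤ 0 :=
      div_nonpos_of_nonneg_of_nonpos hN.le h
    have : τ ≤ 0 := by
      rw [hτdef, tau]
      exact mul_nonpos_of_nonneg_of_nonpos (div_nonneg (by linarith) hp0.le) hdiv
    linarith
  -- properties of z := ωq τ
  obtain ⟨⟨hz1, hz2⟩, hzH⟩ := hωq τ ⟨hτ0, hτ1.le⟩
  set z := ωq τ with hzdef
  have hz0 : (0 : ℝ) < z := by linarith
  have hzsub : z ^ (q - 1) = z ^ q / z := by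
    rw [Real.rpow_sub hz0, Real.rpow_one]
  have hzq : z ^ q = z ^ (q - 1) * z := by
    rw [hzsub]; field_simp
  -- first term positive
  have hRHS : 0 < (p - q) * s₁ * (w ^ q / s₂ - 1) :=
    mul_pos (mul_pos (by linarith) hs₁) hαpos
  have hfirst' : 0 < q * (p * z ^ (q - 1) - (p - 1) * z ^ q) := by
    by_contra h
    push_neg at h
    have : q * (p * z ^ (q - 1) - (p - 1) * z ^ q) * (t ^ (p - q) - s₁ / s₂) ≤ 0 :=
      mul_nonpos_of_nonpos_of_nonneg h hD.le
    rw [heq] at this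
    linarith
  have hfirst : 0 < q * (p - (p - 1) * z) * z ^ (q - 1) := by
    have heqA : q * (p - (p - 1) * z) * z ^ (q - 1)
        = q * (p * z ^ (q - 1) - (p - 1) * z ^ q) := by
      rw [hzq]; ring
    rw [heqA]; exact hfirst'
  -- second term nonnegative
  have hc : p < q * (p - 1) / (q - 1) := by
    rw [lt_div_iff₀ (by linarith : (0 : ℝ) < q - 1)]
    nlinarith
  have hcz : p - q * (p - 1) / (q - 1) * z < 0 := by
    have hcpos : 0 < q * (p - 1) / (q - 1) :=
      div_pos (mul_pos hq0 (by linarith)) (by linarith)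
    have hmul := mul_le_mul_of_nonneg_left hz1 hcpos.le
    rw [mul_one] at hmul
    linarith
  have hτt : τ - t ^ q < 0 := by linarith
  have hsecond : 0 ≤ (p - q * (p - 1) / (q - 1) * z) * (τ - t ^ q) / (z - 1) :=
    div_nonneg (mul_pos_of_neg_of_neg hcz hτt).le (by linarith)
  linarith
end
end

section
/- For every λ ∈ (1, p/(p−1)) and every s₂ with 0 < s₂ ≤ H_q(λ): (p−q)·q·(λ−1)/(q − (q−1)·λ) ≥ q·(λ^(p−q) − H_p(λ)/s₂)·λ^(q−p). -/
noncomputable section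

open Real Set

/-- for every `λ ∈ (1, p/(p−1))` and every `s₂` with
`0 < s₂ ≤ H_q(λ)`:
`(p−q)·q·(λ−1)/(q − (q−1)·λ) ≥ q·(λ^(p−q) − H_p(λ)/s₂)·λ^(q−p)`. -/
theorem stmt_13 (p q : ℝ) (hq : 1 < q) (hqp : q < p) :
    ∀ l ∈ Set.Ioo (1 : ℝ) (p / (p - 1)), ∀ s₂ : ℝ, 0 < s₂ → s₂ ≤ H q l →
      (p - q) * q * (l - 1) / (q - (q - 1) * l)
        ≥ q * (l ^ (p - q) - H p l / s₂) * l ^ (q - p) := by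
  rintro l ⟨hl1, hl2⟩ s₂ hs₂ hs₂le
  have hp1 : (1:ℝ) < p := lt_trans hq hqp
  have hl0 : (0:ℝ) < l := lt_trans one_pos hl1
  have hp0 : (0:ℝ) < p - 1 := by linarith
  have hlp : l * (p - 1) < p := (lt_div_iff₀ hp0).mp hl2
  have hDp : 0 < p - (p - 1) * l := by nlinarith
  have hDq : 0 < q - (q - 1) * l := by nlinarith [mul_pos (sub_pos.mpr hl1) (sub_pos.mpr hqp)]
  have hA : 0 < l ^ (p - q) := Real.rpow_pos_of_pos hl0 _
  have hB : 0 < l ^ (q - 1) := Real.rpow_pos_of_pos hl0 _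
  have hq1 : l ^ (q - 1) * l = l ^ q := by
    rw [← Real.rpow_add_one hl0.ne']; ring_nf
  have hp1' : l ^ (p - 1) * l = l ^ p := by
    rw [← Real.rpow_add_one hl0.ne']; ring_nf
  have hHq : H q l = l ^ (q - 1) * (q - (q - 1) * l) := by
    unfold H; rw [← hq1]; ring
  have hHp : H p l = l ^ (p - 1) * (p - (p - 1) * l) := by
    unfold H; rw [← hp1']; ring
  have hHqpos : 0 < H q l := by rw [hHq]; positivity
  have hHppos : 0 < H p l := by rw [hHp]; positivity
  have key : H p l / H q l ≤ H p l / s₂ :=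
    div_le_div_of_nonneg_left hHppos.le hs₂ hs₂le
  have step : q * (l ^ (p - q) - H p l / s₂) * l ^ (q - p)
      ≤ q * (l ^ (p - q) - H p l / H q l) * l ^ (q - p) := by
    have hq0 : (0:ℝ) ≤ q := by linarith
    have hC : (0:ℝ) ≤ l ^ (q - p) := (Real.rpow_pos_of_pos hl0 _).le
    have : l ^ (p - q) - H p l / s₂ ≤ l ^ (p - q) - H p l / H q l := by linarith
    exact mul_le_mul_of_nonneg_right (mul_le_mul_of_nonneg_left this hq0) hC
  have e2 : l ^ (p - 1) = l ^ (p - q) * l ^ (q - 1) := by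
    rw [← Real.rpow_add hl0, show p - q + (q - 1) = p - 1 by ring]
  have e3 : l ^ (q - p) = (l ^ (p - q))⁻¹ := by
    rw [show q - p = -(p - q) by ring, Real.rpow_neg hl0.le]
  have eq1 : q * (l ^ (p - q) - H p l / H q l) * l ^ (q - p)
      = (p - q) * q * (l - 1) / (q - (q - 1) * l) := by
    rw [hHq, hHp, e2, e3]
    field_simp
    ring
  rw [ge_iff_le, ← eq1]
  exact step
end
end

section
/- Let s₁ ∈ (0,1), put λ = ω_p(s₁), let s₂ ∈ (H_q(λ), 1), and let t satisfy 1 ≤ t ≤ λ. Then τ(s₁,s₂,t) < H_q(λ). -/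
noncomputable section

open Real Set

/-- if `s₁ ∈ (0,1)`, `λ = ω_p(s₁)`, `s₂ ∈ (H_q(λ), 1)` and
`1 ≤ t ≤ λ`, then `τ(s₁,s₂,t) < H_q(λ)`. -/
theorem stmt_17 (p q : ℝ) (hq : 1 < q) (hqp : q < p)
    (ωp : ℝ → ℝ) (hωp : IsOmega p ωp)
    (s₁ : ℝ) (hs₁ : s₁ ∈ Set.Ioo (0 : ℝ) 1)
    (s₂ : ℝ) (hs₂ : s₂ ∈ Set.Ioo (H q (ωp s₁)) 1)
    (t : ℝ) (ht1 : 1 ≤ t) (ht2 : t ≤ ωp s₁) :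
    tau p q s₁ s₂ t < H q (ωp s₁) := by
  obtain ⟨hs₁0, hs₁1⟩ := hs₁
  have hp : 1 < p := hq.trans hqp
  have hp0 : (0:ℝ) < p := by linarith
  obtain ⟨⟨hl1, hl2⟩, hHp⟩ := hωp s₁ ⟨hs₁0, hs₁1.le⟩
  set l := ωp s₁ with hl
  have hl0 : (0:ℝ) < l := by linarith
  have hlgt : 1 < l := by
    rcases eq_or_lt_of_le hl1 with h | h
    · exfalso
      have : H p l = 1 := by rw [← h]; simp [H, Real.one_rpow]
      rw [hHp] at this; linarith
    · exact h
  set c := H q l with hc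
  have hc_eq : c = q * l ^ (q-1) - (q-1) * l ^ q := rfl
  have hA : l ^ (q-1) * l = l ^ q := by
    have h := Real.rpow_add hl0 (q-1) 1
    rw [Real.rpow_one] at h
    rw [show q - 1 + 1 = q by ring] at h
    linarith
  have hApos : (0:ℝ) < l ^ (q-1) := Real.rpow_pos_of_pos hl0 _
  have hBpos : (0:ℝ) < l ^ q := Real.rpow_pos_of_pos hl0 _
  -- c < 1 via strict Bernoulli
  have hc1 : c < 1 := by
    have hs : -1 ≤ l⁻¹ - 1 := by
      have : (0:ℝ) < l⁻¹ := inv_pos.2 hl0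
      linarith
    have hs' : l⁻¹ - 1 ≠ 0 := by
      have : l⁻¹ < 1 := inv_lt_one_of_one_lt₀ hlgt
      intro h; nlinarith
    have hb := one_add_mul_self_lt_rpow_one_add hs hs' hq
    rw [show 1 + (l⁻¹ - 1) = l⁻¹ by ring, Real.inv_rpow hl0.le] at hb
    have hb2 := mul_lt_mul_of_pos_right hb hBpos
    rw [inv_mul_cancel₀ hBpos.ne'] at hb2
    have hAinv : l⁻¹ * l ^ q = l ^ (q-1) := by
      rw [← hA]; field_simp
    have hc' : l ^ q + q * l ^ (q-1) - q * l ^ q < 1 := by nlinarith [hb2, hAinv]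
    rw [hc_eq]; linarith
  -- c > 0
  have hc0 : 0 < c := by
    have hll : l < q / (q-1) := by
      have h1 : p / (p-1) < q / (q-1) := by
        rw [div_lt_div_iff₀ (by linarith) (by linarith)]
        nlinarith
      linarith
    have h2 : (q-1) * l < q := by
      rw [lt_div_iff₀ (by linarith : (0:ℝ) < q - 1)] at hll
      linarith
    have h3 : 0 < l ^ (q-1) * (q - (q-1) * l) := mul_pos hApos (by linarith)
    nlinarith [h3, hA]
  -- basic facts
  obtain ⟨hs₂c, hs₂1⟩ := hs₂
  have hs₂0 : 0 < s₂ := hc0.trans hs₂c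
  have htp1 : (1:ℝ) ≤ t ^ p := Real.one_le_rpow ht1 hp0.le
  have htpq1 : (1:ℝ) ≤ t ^ (p-q) := Real.one_le_rpow ht1 (by linarith)
  have hNpos : 0 < t ^ p - s₁ := by linarith
  rw [tau]
  set D := t ^ (p-q) - s₁ / s₂ with hD
  rcases le_or_gt D 0 with hDle | hDpos
  · rcases eq_or_lt_of_le hDle with h | h
    · rw [h, div_zero, mul_zero]; exact hc0
    · have h1 : (t ^ p - s₁) / D < 0 := div_neg_of_pos_of_neg hNpos h
      have h2 : (p-q)/p * ((t ^ p - s₁) / D) < 0 :=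
        mul_neg_of_pos_of_neg (div_pos (by linarith) hp0) h1
      linarith
  · rw [← mul_div_assoc, div_lt_iff₀ hDpos]
    -- antitone function G
    have hG : AntitoneOn (fun x : ℝ => c * x ^ (p-q) - (p-q)/p * x ^ p)
        (Icc (1:ℝ) l) := by
      have hint : interior (Icc (1:ℝ) l) = Ioo 1 l := interior_Icc
      have hder : ∀ x ∈ Ioo (1:ℝ) l, HasDerivAt
          (fun x : ℝ => c * x ^ (p-q) - (p-q)/p * x ^ p)
          (c * ((p-q) * x ^ (p-q-1)) - (p-q)/p * (p * x ^ (p-1))) x := by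
        intro x hx
        have hx0 : x ≠ 0 := by have := hx.1; positivity
        exact ((Real.hasDerivAt_rpow_const (Or.inl hx0)).const_mul c).sub
          ((Real.hasDerivAt_rpow_const (Or.inl hx0)).const_mul ((p-q)/p))
      apply antitoneOn_of_deriv_nonpos (convex_Icc 1 l)
      · exact (continuousOn_const.mul
            (continuousOn_id.rpow_const fun x _ => Or.inr (by linarith))).sub
          (continuousOn_const.mul
            (continuousOn_id.rpow_const fun x _ => Or.inr hp0.le))
      · rw [hint]
        exact fun x hx => ((hder x hx).differentiableAt).differentiableWithinAt
      · rw [hint]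
        intro x hx
        rw [(hder x hx).deriv]
        have hx1 : (1:ℝ) ≤ x := hx.1.le
        have h1 : x ^ (p-q-1) ≤ x ^ (p-1) :=
          Real.rpow_le_rpow_of_exponent_le hx1 (by linarith)
        have h2 : (0:ℝ) < x ^ (p-q-1) := Real.rpow_pos_of_pos (by linarith [hx.1]) _
        have h4 : (p-q)/p * (p * x ^ (p-1)) = (p-q) * x ^ (p-1) := by
          field_simp
        nlinarith [h4, mul_le_mul_of_nonneg_left h1
            (le_of_lt (show (0:ℝ) < p - q by linarith)),
          mul_pos (show (0:ℝ) < p - q by linarith)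
            (mul_pos h2 (show (0:ℝ) < 1 - c by linarith))]
    have hGt : c * l ^ (p-q) - (p-q)/p * l ^ p ≤ c * t ^ (p-q) - (p-q)/p * t ^ p :=
      hG ⟨ht1, ht2⟩ ⟨hl1, le_refl l⟩ ht2
    have e1 : l ^ (q-1) * l ^ (p-q) = l ^ (p-1) := by
      rw [← Real.rpow_add hl0]; ring_nf
    have e2 : l ^ q * l ^ (p-q) = l ^ p := by
      rw [← Real.rpow_add hl0]; ring_nf
    have hHp' : p * l ^ (p-1) - (p-1) * l ^ p = s₁ := hHp
    have key0 : (c * l ^ (p-q)) * p - (p-q) * l ^ p = q * s₁ := by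
      rw [hc_eq]
      linear_combination p * q * e1 - p * (q-1) * e2 + q * hHp'
    have key : c * l ^ (p-q) - (p-q)/p * l ^ p = q/p * s₁ := by
      field_simp
      linear_combination key0
    have hcs : c * (s₁ / s₂) < s₁ := by
      rw [mul_div_assoc', div_lt_iff₀ hs₂0]
      have h := mul_lt_mul_of_pos_right hs₂c hs₁0
      linarith
    have hsum : q/p * s₁ + (p-q)/p * s₁ = s₁ := by
      field_simp
      ring
    have hexp : c * D = c * t ^ (p-q) - c * (s₁ / s₂) := by rw [hD]; ring
    have hexp2 : (p-q)/p * (t ^ p - s₁) = (p-q)/p * t ^ p - (p-q)/p * s₁ := by ring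
    linarith [hGt, key, hcs, hsum, hexp, hexp2]
end
end

section
/- Let s₁ ∈ (0,1), put λ = ω_p(s₁), let s₂ ∈ (s₁^((q−1)/(p−1)), H_q(λ)), let t satisfy 1 ≤ t ≤ λ, suppose τ := τ(s₁,s₂,t) ∈ (0,1), and suppose (s₁,s₂,t) satisfies the defining equation. Then τ > H_q(λ), and consequently F(τ) > (p−q)·A(s₂). -/
noncomputable section

open Real Set

private lemma hasDerivAt_comb (a m b n x : ℝ) (hx : x ≠ 0) :
    HasDerivAt (fun y : ℝ => a * y ^ m - b * y ^ n)
      (a * (m * x ^ (m - 1)) - b * (n * x ^ (n - 1))) x :=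
  ((Real.hasDerivAt_rpow_const (Or.inl hx)).const_mul a).sub
    ((Real.hasDerivAt_rpow_const (Or.inl hx)).const_mul b)

private lemma psi_mono (p q : ℝ) (hq : 1 < q) (hqp : q < p) :
    StrictMonoOn (fun x : ℝ => (p - 1) * x ^ q - p * x ^ (q - 1)) (Ici 1) := by
  apply strictMonoOn_of_deriv_pos (convex_Ici 1)
  · intro x hx
    have hx0 : (0:ℝ) < x := lt_of_lt_of_le zero_lt_one hx
    exact ((hasDerivAt_comb (p-1) q p (q-1) x hx0.ne').continuousAt).continuousWithinAt
  · intro x hx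
    rw [interior_Ici] at hx
    have hx1 : 1 < x := hx
    have hx0 : (0:ℝ) < x := lt_trans zero_lt_one hx1
    rw [(hasDerivAt_comb (p-1) q p (q-1) x hx0.ne').deriv]
    have hxx : x ^ (q - 1) = x ^ (q - 1 - 1) * x := by
      rw [show q - 1 = (q - 1 - 1) + 1 by ring, Real.rpow_add_one hx0.ne']
      ring_nf
    have hpow : 0 < x ^ (q - 1 - 1) := Real.rpow_pos_of_pos hx0 _
    have hbr : 0 < (p - 1) * q * x - p * (q - 1) := by
      nlinarith [mul_pos (mul_pos (show (0:ℝ) < p - 1 by linarith)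
        (show (0:ℝ) < q by linarith)) (show (0:ℝ) < x - 1 by linarith)]
    rw [hxx]
    nlinarith [mul_pos hpow hbr]

private lemma g_anti (p q : ℝ) (hq : 1 < q) (hqp : q < p) :
    StrictAntiOn (fun x : ℝ => p * x ^ (q - 1) - (p - 1) * x ^ q) (Ici 1) := by
  apply strictAntiOn_of_deriv_neg (convex_Ici 1)
  · intro x hx
    have hx0 : (0:ℝ) < x := lt_of_lt_of_le zero_lt_one hx
    exact ((hasDerivAt_comb p (q-1) (p-1) q x hx0.ne').continuousAt).continuousWithinAt
  · intro x hx
    rw [interior_Ici] at hx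
    have hx1 : 1 < x := hx
    have hx0 : (0:ℝ) < x := lt_trans zero_lt_one hx1
    rw [(hasDerivAt_comb p (q-1) (p-1) q x hx0.ne').deriv]
    have hxx : x ^ (q - 1) = x ^ (q - 1 - 1) * x := by
      rw [show q - 1 = (q - 1 - 1) + 1 by ring, Real.rpow_add_one hx0.ne']
      ring_nf
    have hpow : 0 < x ^ (q - 1 - 1) := Real.rpow_pos_of_pos hx0 _
    have hbr : 0 < (p - 1) * q * x - p * (q - 1) := by
      nlinarith [mul_pos (mul_pos (show (0:ℝ) < p - 1 by linarith)
        (show (0:ℝ) < q by linarith)) (show (0:ℝ) < x - 1 by linarith)]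
    rw [hxx]
    nlinarith [mul_pos hpow hbr]

private lemma h_anti (q : ℝ) (hq : 1 < q) :
    StrictAntiOn (fun z : ℝ => q * z ^ (q - 1) - (q - 1) * z ^ q) (Ici 1) := by
  apply strictAntiOn_of_deriv_neg (convex_Ici 1)
  · intro x hx
    have hx0 : (0:ℝ) < x := lt_of_lt_of_le zero_lt_one hx
    exact ((hasDerivAt_comb q (q-1) (q-1) q x hx0.ne').continuousAt).continuousWithinAt
  · intro x hx
    rw [interior_Ici] at hx
    have hx1 : 1 < x := hx
    have hx0 : (0:ℝ) < x := lt_trans zero_lt_one hx1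
    rw [(hasDerivAt_comb q (q-1) (q-1) q x hx0.ne').deriv]
    have hxx : x ^ (q - 1) = x ^ (q - 1 - 1) * x := by
      rw [show q - 1 = (q - 1 - 1) + 1 by ring, Real.rpow_add_one hx0.ne']
      ring_nf
    have hpow : 0 < x ^ (q - 1 - 1) := Real.rpow_pos_of_pos hx0 _
    have hbr : 0 < q * (q - 1) * (x - 1) := by
      exact mul_pos (mul_pos (by linarith) (by linarith)) (by linarith)
    rw [hxx]
    nlinarith [mul_pos hpow hbr]

private lemma rho_anti (q : ℝ) (hq : 1 < q) :
    StrictAntiOn (fun x : ℝ => x ^ q / (x - 1)) (Ioo 1 (q / (q - 1))) := by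
  have hder : ∀ x ∈ Ioo (1:ℝ) (q/(q-1)), HasDerivAt (fun x : ℝ => x ^ q / (x - 1))
      ((q * x ^ (q-1) * (x - 1) - x ^ q * 1) / (x - 1) ^ 2) x := by
    intro x hx
    have hx0 : (0:ℝ) < x := lt_trans zero_lt_one hx.1
    exact (Real.hasDerivAt_rpow_const (Or.inl hx0.ne')).div
      ((hasDerivAt_id x).sub_const 1) (sub_ne_zero.mpr (ne_of_gt hx.1))
  apply strictAntiOn_of_deriv_neg (convex_Ioo 1 (q/(q-1)))
  · intro x hx
    exact ((hder x hx).continuousAt).continuousWithinAt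
  · intro x hx
    rw [interior_Ioo] at hx
    have hx1 : 1 < x := hx.1
    have hx0 : (0:ℝ) < x := lt_trans zero_lt_one hx1
    rw [(hder x hx).deriv]
    have hxx : x ^ q = x ^ (q - 1) * x := by
      rw [show q = (q - 1) + 1 by ring, Real.rpow_add_one hx0.ne']
      ring_nf
    have hpow : 0 < x ^ (q - 1) := Real.rpow_pos_of_pos hx0 _
    have hxd : (q - 1) * x < q := by
      have := hx.2
      rwa [lt_div_iff₀ (by linarith : (0:ℝ) < q - 1), mul_comm] at this
    apply div_neg_of_neg_of_pos
    · rw [hxx]; nlinarith [mul_pos hpow (show (0:ℝ) < q - (q-1)*x by linarith)]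
    · exact pow_pos (by linarith : (0:ℝ) < x - 1) 2

/-- if `s₁ ∈ (0,1)`, `λ = ω_p(s₁)`,
`s₂ ∈ (s₁^((q−1)/(p−1)), H_q(λ))`, `1 ≤ t ≤ λ`, `τ := τ(s₁,s₂,t) ∈ (0,1)` and
`(s₁,s₂,t)` satisfies the defining equation, then `τ > H_q(λ)` and consequently
`F(τ) > (p−q)·A(s₂)`. -/
theorem stmt_19 (p q : ℝ) (hq : 1 < q) (hqp : q < p)
    (ωp ωq : ℝ → ℝ) (hωp : IsOmega p ωp) (hωq : IsOmega q ωq)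
    (s₁ : ℝ) (hs₁ : s₁ ∈ Set.Ioo (0 : ℝ) 1)
    (s₂ : ℝ) (hs₂ : s₂ ∈ Set.Ioo (s₁ ^ ((q - 1) / (p - 1))) (H q (ωp s₁)))
    (t : ℝ) (ht1 : 1 ≤ t) (ht2 : t ≤ ωp s₁)
    (hτ : tau p q s₁ s₂ t ∈ Set.Ioo (0 : ℝ) 1)
    (heq : q * (p * ωq (tau p q s₁ s₂ t) ^ (q - 1)
          - (p - 1) * ωq (tau p q s₁ s₂ t) ^ q) * (t ^ (p - q) - s₁ / s₂)
        = (p - q) * s₁ * (ωq s₂ ^ q / s₂ - 1)) :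
    H q (ωp s₁) < tau p q s₁ s₂ t ∧
    (p - q) * Afun q ωq s₂ < Ffun p q ωq (tau p q s₁ s₂ t) := by
  obtain ⟨hτ0, hτ1⟩ := hτ
  have hp1 : 1 < p := hq.trans hqp
  have hq1 : (0:ℝ) < q - 1 := by linarith
  have hpq : (0:ℝ) < p - q := by linarith
  obtain ⟨hlmem, hleq⟩ := hωp s₁ ⟨hs₁.1, hs₁.2.le⟩
  set lam := ωp s₁ with hlamdef
  have hlam1 : 1 ≤ lam := hlmem.1
  have hlam0 : (0:ℝ) < lam := lt_of_lt_of_le zero_lt_one hlam1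
  have hH1 : H q 1 = 1 := by
    unfold H; rw [Real.one_rpow, Real.one_rpow]; ring
  have hHlam_le : H q lam ≤ 1 := by
    rcases eq_or_lt_of_le hlam1 with h | h
    · rw [← h, hH1]
    · have h2 := h_anti q hq Set.self_mem_Ici (Set.mem_Ici.mpr h.le) h
      simp only at h2
      have e1 : H q lam = q * lam ^ (q-1) - (q-1) * lam ^ q := rfl
      rw [e1]
      rw [Real.one_rpow, Real.one_rpow] at h2
      linarith
  have hs2pos : (0:ℝ) < s₂ := (Real.rpow_pos_of_pos hs₁.1 _).trans hs₂.1
  have hs2lt : s₂ < 1 := lt_of_lt_of_le hs₂.2 hHlam_le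
  obtain ⟨hvmem, hveq⟩ := hωq s₂ ⟨hs2pos, hs2lt.le⟩
  set v := ωq s₂ with hvdef
  obtain ⟨hwmem, hweq⟩ := hωq (tau p q s₁ s₂ t) ⟨hτ0, hτ1.le⟩
  set w := ωq (tau p q s₁ s₂ t) with hwdef
  have hw0 : (0:ℝ) < w := lt_of_lt_of_le zero_lt_one hwmem.1
  have hv0 : (0:ℝ) < v := lt_of_lt_of_le zero_lt_one hvmem.1
  have hw1 : 1 < w := by
    rcases eq_or_lt_of_le hwmem.1 with h | h
    · exfalso
      rw [← h, hH1] at hweq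
      linarith
    · exact h
  have hv_gt : lam < v := by
    by_contra hcon
    push_neg at hcon
    have hle : H q lam ≤ H q v := by
      rcases eq_or_lt_of_le hcon with h | h
      · rw [h]
      · have h2 := h_anti q hq (Set.mem_Ici.mpr hvmem.1) (Set.mem_Ici.mpr hlam1) h
        simp only at h2
        have e1 : H q lam = q * lam ^ (q-1) - (q-1) * lam ^ q := rfl
        have e2 : H q v = q * v ^ (q-1) - (q-1) * v ^ q := rfl
        rw [e1, e2]
        linarith
    rw [hveq] at hle
    linarith [hs₂.2]
  have hv1 : 1 < v := lt_of_le_of_lt hlam1 hv_gt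
  -- denominator positivity
  have ht0 : (0:ℝ) < t := lt_of_lt_of_le zero_lt_one ht1
  have htp : 1 ≤ t ^ p := Real.one_le_rpow ht1 (by linarith)
  have hnum : (0:ℝ) < t ^ p - s₁ := by linarith [hs₁.2]
  have hD : (0:ℝ) < t ^ (p - q) - s₁ / s₂ := by
    have h : (0:ℝ) < ((p - q) / p) * ((t ^ p - s₁) / (t ^ (p - q) - s₁ / s₂)) := hτ0
    have hc : (0:ℝ) < (p - q) / p := div_pos hpq (by linarith)
    have h2 : (0:ℝ) < (t ^ p - s₁) / (t ^ (p - q) - s₁ / s₂) := by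
      by_contra hcon
      push_neg at hcon
      nlinarith
    rcases div_pos_iff.mp h2 with ⟨_, h3⟩ | ⟨h3, _⟩
    · exact h3
    · linarith
  -- identities at lam
  have hs₁eq : s₁ = p * lam ^ (p - 1) - (p - 1) * lam ^ p := by
    rw [← hleq]; rfl
  have hpowa : lam ^ (q - p) * lam ^ (p - 1) = lam ^ (q - 1) := by
    rw [← Real.rpow_add hlam0]; ring_nf
  have hpowb : lam ^ (q - p) * lam ^ p = lam ^ q := by
    rw [← Real.rpow_add hlam0]; ring_nf
  have hpowc : lam ^ (q - p) * lam ^ (p - q) = 1 := by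
    rw [← Real.rpow_add hlam0]
    norm_num
  have hX : (0:ℝ) < lam ^ (q - p) := Real.rpow_pos_of_pos hlam0 _
  have hs₁lam : s₁ * lam ^ (q - p) = p * lam ^ (q - 1) - (p - 1) * lam ^ q := by
    rw [hs₁eq]
    linear_combination p * hpowa - (p - 1) * hpowb
  have hGlam : q * (p * lam ^ (q - 1) - (p - 1) * lam ^ q) = q * s₁ * lam ^ (q - p) := by
    linear_combination (-q) * hs₁lam
  have hs₂eq : s₂ = q * v ^ (q - 1) - (q - 1) * v ^ q := by rw [← hveq]; rfl
  have hfrac : s₁ / s₂ * s₂ = s₁ := div_mul_cancel₀ s₁ hs2pos.ne'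
  have hfracv : v ^ q / s₂ * s₂ = v ^ q := div_mul_cancel₀ _ hs2pos.ne'
  set G : ℝ := q * (p * w ^ (q - 1) - (p - 1) * w ^ q) with hGdef
  have heq' : G * (s₂ * t ^ (p - q) - s₁) = (p - q) * s₁ * (v ^ q - s₂) := by
    calc G * (s₂ * t ^ (p - q) - s₁)
        = G * (t ^ (p - q) - s₁ / s₂) * s₂ := by linear_combination G * hfrac
      _ = (p - q) * s₁ * (v ^ q / s₂ - 1) * s₂ := by rw [heq]
      _ = (p - q) * s₁ * (v ^ q - s₂) := by
          linear_combination ((p - q) * s₁) * hfracv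
  have hD' : (0:ℝ) < s₂ * t ^ (p - q) - s₁ := by
    have h := mul_pos hD hs2pos
    have e : (t ^ (p - q) - s₁ / s₂) * s₂ = s₂ * t ^ (p - q) - s₁ := by
      linear_combination (-1 : ℝ) * hfrac
    rw [e] at h
    exact h
  have htle : t ^ (p - q) ≤ lam ^ (p - q) := Real.rpow_le_rpow ht0.le ht2 hpq.le
  have hψ : (p - 1) * lam ^ q - p * lam ^ (q - 1) < (p - 1) * v ^ q - p * v ^ (q - 1) := by
    have h2 := psi_mono p q hq hqp (Set.mem_Ici.mpr hlam1) (Set.mem_Ici.mpr hv1.le) hv_gt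
    simpa using h2
  have hstep : q * (p * lam ^ (q - 1) - (p - 1) * lam ^ q) * (s₂ * t ^ (p - q) - s₁)
      < (p - q) * s₁ * (v ^ q - s₂) := by
    have h1 : q * (p * lam ^ (q - 1) - (p - 1) * lam ^ q) * (s₂ * t ^ (p - q) - s₁)
        ≤ q * s₁ * lam ^ (q - p) * (s₂ * lam ^ (p - q) - s₁) := by
      rw [hGlam]
      apply mul_le_mul_of_nonneg_left _ (le_of_lt (mul_pos (mul_pos (show (0:ℝ) < q by linarith) hs₁.1) hX))
      have := mul_le_mul_of_nonneg_left htle hs2pos.le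
      linarith
    have h2 : q * s₁ * lam ^ (q - p) * (s₂ * lam ^ (p - q) - s₁)
        = q * s₁ * s₂ - q * s₁ * (p * lam ^ (q - 1) - (p - 1) * lam ^ q) := by
      linear_combination (q * s₁ * s₂) * hpowc - (q * s₁) * hs₁lam
    have hd : (0:ℝ) < ((p-1) * v ^ q - p * v ^ (q-1)) - ((p-1) * lam ^ q - p * lam ^ (q-1)) := by
      linarith
    have hkey2 : (0:ℝ) < s₁ * (q * (((p-1) * v ^ q - p * v ^ (q-1))
        - ((p-1) * lam ^ q - p * lam ^ (q-1)))) :=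
      mul_pos hs₁.1 (mul_pos (by linarith) hd)
    have e : (p - q) * s₁ * (v ^ q - s₂)
        - (q * s₁ * s₂ - q * s₁ * (p * lam ^ (q - 1) - (p - 1) * lam ^ q))
        = s₁ * (q * (((p-1) * v ^ q - p * v ^ (q-1))
            - ((p-1) * lam ^ q - p * lam ^ (q-1)))) := by
      linear_combination (-(p * s₁)) * hs₂eq
    linarith
  have hGgt : q * (p * lam ^ (q - 1) - (p - 1) * lam ^ q) < G := by
    have h := hstep.trans_eq heq'.symm
    exact lt_of_mul_lt_mul_right h hD'.le
  have hwlam : w < lam := by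
    by_contra hcon
    push_neg at hcon
    rcases eq_or_lt_of_le hcon with h | h
    · have e : q * (p * lam ^ (q - 1) - (p - 1) * lam ^ q) = G := by
        rw [hGdef, h]
      linarith
    · have h2 := g_anti p q hq hqp (Set.mem_Ici.mpr hlam1)
        (Set.mem_Ici.mpr (le_trans hlam1 hcon)) h
      simp only at h2
      have h3 : G < q * (p * lam ^ (q - 1) - (p - 1) * lam ^ q) := by
        rw [hGdef]
        have := mul_lt_mul_of_pos_left h2 (show (0:ℝ) < q by linarith)
        linarith
      linarith
  have hgoal1 : H q lam < tau p q s₁ s₂ t := by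
    have h2 := h_anti q hq (Set.mem_Ici.mpr hwmem.1) (Set.mem_Ici.mpr hlam1) hwlam
    simp only at h2
    rw [← hweq]
    have e1 : H q lam = q * lam ^ (q-1) - (q-1) * lam ^ q := rfl
    have e2 : H q w = q * w ^ (q-1) - (q-1) * w ^ q := rfl
    rw [e1, e2]
    linarith
  refine ⟨hgoal1, ?_⟩
  -- part 2
  have hwq : w ^ q = w ^ (q - 1) * w := by
    have h := Real.rpow_add_one hw0.ne' (q - 1)
    rw [show q - 1 + 1 = q by ring] at h
    exact h
  have hvq : v ^ q = v ^ (q - 1) * v := by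
    have h := Real.rpow_add_one hv0.ne' (q - 1)
    rw [show q - 1 + 1 = q by ring] at h
    exact h
  have hw1' : w - 1 ≠ 0 := sub_ne_zero.mpr (ne_of_gt hw1)
  have h1w : 1 - w ≠ 0 := sub_ne_zero.mpr (ne_of_lt hw1)
  have hv1' : v - 1 ≠ 0 := sub_ne_zero.mpr (ne_of_gt hv1)
  have hq1' : q - 1 ≠ 0 := ne_of_gt hq1
  have htaueq : tau p q s₁ s₂ t = q * w ^ (q - 1) - (q - 1) * w ^ q := by
    rw [← hweq]; rfl
  have hFeq : Ffun p q ωq (tau p q s₁ s₂ t) = (p - q) / (q - 1) * (w ^ q / (w - 1)) := by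
    simp only [Ffun]
    rw [← hwdef, htaueq, hwq]
    field_simp
    ring
  have hsv : s₂ * (v ^ q / s₂) = v ^ q := by field_simp
  have hAeq : (p - q) * Afun q ωq s₂ = (p - q) / (q - 1) * (v ^ q / (v - 1)) := by
    simp only [Afun]
    rw [← hvdef, mul_add, hsv, hs₂eq, hvq]
    field_simp
    ring_nf
    try exact Or.inl trivial
  have hwv : w < v := lt_trans hwlam hv_gt
  have hρ := rho_anti q hq (Set.mem_Ioo.mpr ⟨hw1, hwmem.2⟩) (Set.mem_Ioo.mpr ⟨hv1, hvmem.2⟩) hwv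
  simp only at hρ
  rw [hFeq, hAeq]
  exact mul_lt_mul_of_pos_left hρ (div_pos hpq hq1)

end
end
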